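/- arXiv:1410.6930 — 3 statements merged into one kernel-verified Lean document; each statement's English description precedes it below -/
import Mathlib

section
/- Let S be a standard Borel space, p a probability measure on S, and μ a shift-invariant probability measure on S^{Z^d}. Then the sequence (1/(2n)^d) I(μ_{Λ_n}; p^{⊗Λ_n}) converges in [0,+∞] as n → ∞; in particular the specific entropy ℐ(μ), defined as the limsup of this sequence, is in fact its limit. -/
open MeasureTheory Filter
open scoped ENNReal

/-- The lattice `ℤ^d`. -/
abbrev Zd (d : ℕ) := Fin d → ℤ

/-- The shift by vector `-i` on the configuration space `S^{ℤ^d}`: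
`(θ_i ω)_j = ω_{j+i}`. -/
def shift (S : Type*) {d : ℕ} (i : Zd d) (ω : Zd d → S) : Zd d → S :=
  fun j => ω (j + i)

/-- A measure on `S^{ℤ^d}` is shift-invariant if it is invariant under all shifts. -/
def ShiftInvariant {S : Type*} [MeasurableSpace S] {d : ℕ}
    (μ : Measure (Zd d → S)) : Prop :=
  ∀ i : Zd d, μ.map (shift S i) = μ

/-- The cube `Λ_n = {-n, …, n-1}^d` as a finite subset of `ℤ^d`. -/
noncomputable def cube (d n : ℕ) : Finset (Zd d) :=
  Finset.Icc (fun _ => -(n : ℤ)) (fun _ => (n : ℤ) - 1)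

/-- The marginal of `μ` on the coordinates in `Λ`. -/
noncomputable def marginal {S : Type*} [MeasurableSpace S] {d : ℕ}
    (μ : Measure (Zd d → S)) (Λ : Finset (Zd d)) : Measure (Λ → S) :=
  μ.map (fun ω (j : Λ) => ω j)

open Classical in
/-- The relative entropy `I(μ;ν) = ∫ log(dμ/dν) dμ` if `μ ≪ ν` (and the integral
makes sense), `+∞` otherwise. -/
noncomputable def relEnt {α : Type*} [MeasurableSpace α] (μ ν : Measure α) : ℝ≥0∞ :=
  if μ ≪ ν ∧ Integrable (llr μ ν) μ then ENNReal.ofReal (∫ x, llr μ ν x ∂μ) else ⊤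

/-- The specific entropy of `μ` relative to the reference product measure `p^{⊗ℤ^d}`:
`ℐ(μ) = limsup_n (1/(2n)^d) I(μ_{Λ_n}; p^{⊗Λ_n})`. -/
noncomputable def specEnt {S : Type*} [MeasurableSpace S] {d : ℕ}
    (p : Measure S) (μ : Measure (Zd d → S)) : ℝ≥0∞ :=
  Filter.limsup
    (fun n : ℕ =>
      relEnt (marginal μ (cube d n)) (Measure.pi fun _ : cube d n => p)
        / ((2 * n : ℝ≥0∞) ^ d))
    Filter.atTop

/-! Write `H(Λ) = I(μ_Λ; p^{⊗Λ})`. The data processing inequality makes `H` monotone in `Λ` and,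
by shift invariance, non-decreasing under translating `Λ`; the chain rule, applied to a
disintegration of `μ_{Λ₁ ∪ Λ₂}`, makes `H` superadditive over disjoint regions. Tiling `Λ_{kn}` by `k^d` translates of `Λ_n` gives
`k^d H(Λ_n) ≤ H(Λ_{kn})`, so for `m → ∞` and `k = ⌊m/n⌋` monotonicity yields
`H(Λ_m)/(2m)^d ≥ (k/(k+1))^d H(Λ_n)/(2n)^d`: the liminf dominates every term, hence the limsup. -/

open InformationTheory ProbabilityTheory Topology

lemma relEnt_eq_klDiv {α : Type*} [MeasurableSpace α] {μ ν : Measure α}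
    [IsProbabilityMeasure μ] [IsProbabilityMeasure ν] : relEnt μ ν = klDiv μ ν := by
  by_cases h : μ ≪ ν ∧ Integrable (llr μ ν) μ
  · simp [relEnt, h, klDiv_of_ac_of_integrable h.1 h.2]
  · rw [relEnt, if_neg h, eq_comm, klDiv_eq_top_iff]
    exact fun hac hint ↦ h ⟨hac, hint⟩

lemma klDiv_map_measurableEquiv {α β : Type*} [MeasurableSpace α] [MeasurableSpace β]
    (μ ν : Measure α) [IsFiniteMeasure μ] [IsFiniteMeasure ν] (e : α ≃ᵐ β) :
    klDiv (μ.map e) (ν.map e) = klDiv μ ν := by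
  refine le_antisymm (klDiv_map_le μ ν e.measurable) ?_
  simpa only [e.map_symm_map] using klDiv_map_le (μ.map e) (ν.map e) e.symm.measurable

lemma klDiv_fst_add_klDiv_snd_le {X Y : Type*} [MeasurableSpace X] [MeasurableSpace Y]
    [StandardBorelSpace Y] [Nonempty Y] (ρ : Measure (X × Y)) [IsProbabilityMeasure ρ]
    (ν₁ : Measure X) (ν₂ : Measure Y) [IsProbabilityMeasure ν₁] [IsProbabilityMeasure ν₂] :
    klDiv ρ.fst ν₁ + klDiv ρ.snd ν₂ ≤ klDiv ρ (ν₁.prod ν₂) := by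
  have hsnd : klDiv ρ.snd ν₂ ≤ klDiv ρ (ρ.fst.prod ν₂) := by
    simpa [Measure.snd] using klDiv_map_le ρ (ρ.fst.prod ν₂) measurable_snd
  calc klDiv ρ.fst ν₁ + klDiv ρ.snd ν₂
      ≤ klDiv ρ.fst ν₁ + klDiv (ρ.fst ⊗ₘ ρ.condKernel) (ρ.fst ⊗ₘ Kernel.const X ν₂) := by
        rw [Measure.compProd_const, ρ.disintegrate ρ.condKernel]
        exact add_le_add le_rfl hsnd
    _ = klDiv ρ (ν₁.prod ν₂) := by
        rw [← klDiv_compProd_eq_add, ρ.disintegrate ρ.condKernel, Measure.compProd_const]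

lemma MeasureTheory.Measure.pi_map_comp_of_injective {S ι ι' : Type*} [MeasurableSpace S]
    [Fintype ι] [Fintype ι'] (p : Measure S) [IsProbabilityMeasure p] {g : ι → ι'}
    (hg : Function.Injective g) :
    (Measure.pi fun _ : ι' ↦ p).map (fun f ↦ f ∘ g) = Measure.pi fun _ : ι ↦ p := by
  refine (Measure.pi_eq fun s hs ↦ ?_).symm
  have hpre : (fun f : ι' → S ↦ f ∘ g) ⁻¹' Set.univ.pi s
      = Set.univ.pi (Function.extend g s fun _ ↦ Set.univ) := by
    ext f
    simp only [Set.mem_preimage, Set.mem_univ_pi, Function.comp_apply]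
    refine ⟨fun h i' ↦ ?_, fun h i ↦ by simpa [hg.extend_apply] using h (g i)⟩
    by_cases hi' : ∃ i, g i = i'
    · obtain ⟨i, rfl⟩ := hi'
      simpa [hg.extend_apply] using h i
    · simp [Function.extend_apply' _ _ _ hi']
  rw [Measure.map_apply (by fun_prop) (.univ_pi hs), hpre, Measure.pi_pi]
  refine (Fintype.prod_of_injective g hg _ _ (fun i' hi' ↦ ?_) fun i ↦ ?_).symm
  · simp [Function.extend_apply' _ _ _ (by simpa using hi')]
  · rw [hg.extend_apply]

lemma ENNReal.tendsto_natCast_div_add_one :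
    Tendsto (fun k : ℕ ↦ (k : ℝ≥0∞) / (k + 1)) atTop (𝓝 1) := by
  have h := ENNReal.tendsto_coe.2 (tendsto_natCast_div_add_atTop (1 : NNReal))
  refine h.congr fun k ↦ ?_
  rw [ENNReal.coe_div (by positivity)]
  push_cast
  rfl

lemma le_liminf_div_pow_of_pow_mul_le {d : ℕ} {A : ℕ → ℝ≥0∞} (hmono : Monotone A) {n : ℕ}
    (hn : 0 < n) (hsuper : ∀ k : ℕ, (k : ℝ≥0∞) ^ d * A n ≤ A (k * n)) :
    A n / (2 * n : ℝ≥0∞) ^ d ≤ liminf (fun m : ℕ ↦ A m / (2 * m : ℝ≥0∞) ^ d) atTop := by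
  set f : ℕ → ℝ≥0∞ := fun m ↦ A m / (2 * m : ℝ≥0∞) ^ d
  have hlower : ∀ m, ((m / n : ℕ) / ((m / n : ℕ) + 1) : ℝ≥0∞) ^ d * f n ≤ f m := by
    intro m
    set k := m / n
    have hm : m < (k + 1) * n := by
      rw [add_mul, one_mul]; exact Nat.lt_div_mul_add hn
    calc ((k : ℝ≥0∞) / (k + 1)) ^ d * f n
        = (k : ℝ≥0∞) ^ d * A n / (2 * ((k + 1) * n : ℕ) : ℝ≥0∞) ^ d := by
          push_cast
          simp only [f, div_eq_mul_inv, mul_pow, ← ENNReal.inv_pow]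
          rw [ENNReal.mul_inv (by simp) (by simp), ENNReal.mul_inv (by simp) (by simp),
            ENNReal.mul_inv (by simp) (by simp)]
          ring
      _ ≤ A m / (2 * m : ℝ≥0∞) ^ d := by
          gcongr
          exact (hsuper k).trans (hmono (Nat.div_mul_le_self m n))
  have hlim : Tendsto (fun m : ℕ ↦ ((m / n : ℕ) / ((m / n : ℕ) + 1) : ℝ≥0∞) ^ d * f n)
      atTop (𝓝 (f n)) := by
    have := ENNReal.Tendsto.mul_const (((ENNReal.continuous_pow d).tendsto 1).comp
      (ENNReal.tendsto_natCast_div_add_one.comp (Nat.tendsto_div_const_atTop hn.ne')))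
      (b := f n) (Or.inl (by simp))
    simpa using this
  calc f n = liminf (fun m : ℕ ↦ ((m / n : ℕ) / ((m / n : ℕ) + 1) : ℝ≥0∞) ^ d * f n) atTop :=
        hlim.liminf_eq.symm
    _ ≤ liminf f atTop := liminf_le_liminf (.of_forall hlower)

lemma tendsto_div_pow_limsup_of_pow_mul_le {d : ℕ} {A : ℕ → ℝ≥0∞} (hmono : Monotone A)
    (hsuper : ∀ n k : ℕ, 0 < n → (k : ℝ≥0∞) ^ d * A n ≤ A (k * n)) :
    Tendsto (fun n : ℕ ↦ A n / (2 * n : ℝ≥0∞) ^ d) atTop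
      (𝓝 (limsup (fun n : ℕ ↦ A n / (2 * n : ℝ≥0∞) ^ d) atTop)) := by
  refine tendsto_of_liminf_eq_limsup (le_antisymm liminf_le_limsup ?_) rfl
  refine limsup_le_of_le (by isBoundedDefault) ?_
  filter_upwards [eventually_gt_atTop 0] with n hn
  exact le_liminf_div_pow_of_pow_mul_le hmono hn (hsuper n · hn)

@[fun_prop]
lemma measurable_shift (S : Type*) [MeasurableSpace S] {d : ℕ} (v : Zd d) :
    Measurable (shift S v) :=
  measurable_pi_lambda _ fun _ ↦ measurable_pi_apply _

lemma shift_zero (S : Type*) (d : ℕ) : shift S (0 : Zd d) = id := by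
  funext ω j
  simp [shift]

instance isProbabilityMeasure_marginal {S : Type*} [MeasurableSpace S] {d : ℕ}
    (μ : Measure (Zd d → S)) [IsProbabilityMeasure μ] (Λ : Finset (Zd d)) :
    IsProbabilityMeasure (marginal μ Λ) :=
  Measure.isProbabilityMeasure_map (Finset.measurable_restrict Λ).aemeasurable

lemma mem_cube {d n : ℕ} {j : Zd d} : j ∈ cube d n ↔ ∀ i, -(n : ℤ) ≤ j i ∧ j i ≤ n - 1 := by
  simp only [cube, Finset.mem_Icc, Pi.le_def, forall_and]

lemma cube_mono {d : ℕ} : Monotone (cube d) := fun m n h ↦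
  Finset.Icc_subset_Icc (fun _ ↦ by simpa using h) (fun _ ↦ by simpa using h)

-- The fibres of `j ↦ ⌊(j + kn)/2n⌋` partition `Λ_{kn}` into `k^d` translates of `Λ_n`.
noncomputable def cubeBlock (d n k : ℕ) (τ : Fin d → Fin k) : Finset (Zd d) :=
  {j ∈ cube d (k * n) | ∀ i, (j i + k * n) / (2 * n) = τ i}

lemma pairwiseDisjoint_cubeBlock (d n k : ℕ) :
    (Set.univ : Set (Fin d → Fin k)).PairwiseDisjoint (cubeBlock d n k) := by
  intro τ _ τ' _ hne
  refine Finset.disjoint_left.2 fun j hj hj' ↦ hne (funext fun i ↦ ?_)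
  have h := (Finset.mem_filter.1 hj).2 i
  rw [(Finset.mem_filter.1 hj').2 i] at h
  exact Fin.ext (by exact_mod_cast h.symm)

lemma add_mem_cubeBlock {d n k : ℕ} (hn : 0 < n) (τ : Fin d → Fin k) {j : Zd d}
    (hj : j ∈ cube d n) : j + (fun i ↦ (2 * n * τ i + n - k * n : ℤ)) ∈ cubeBlock d n k τ := by
  rw [mem_cube] at hj
  refine Finset.mem_filter.2 ⟨mem_cube.2 fun i ↦ ?_, fun i ↦ ?_⟩
  · have hτ : (τ i : ℤ) + 1 ≤ k := by exact_mod_cast (τ i).isLt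
    have := hj i
    simp only [Pi.add_apply]
    push_cast
    constructor <;> nlinarith
  · have := hj i
    calc (j i + (2 * n * τ i + n - k * n) + k * n) / (2 * n)
        = (j i + n + τ i * (2 * n)) / (2 * n) := by ring_nf
      _ = τ i := by
        rw [Int.add_mul_ediv_right _ _ (by positivity),
          Int.ediv_eq_zero_of_lt (by omega) (by omega), zero_add]

noncomputable def localEnt {S : Type*} [MeasurableSpace S] {d : ℕ} (p : Measure S)
    (μ : Measure (Zd d → S)) (Λ : Finset (Zd d)) : ℝ≥0∞ :=
  klDiv (marginal μ Λ) (Measure.pi fun _ : Λ ↦ p)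

section LocalEnt

variable {S : Type*} [MeasurableSpace S] {d : ℕ} (p : Measure S) [IsProbabilityMeasure p]
  {μ : Measure (Zd d → S)} [IsProbabilityMeasure μ]

lemma localEnt_le_of_add_mem {Λ Λ' : Finset (Zd d)} (v : Zd d) (hv : μ.map (shift S v) = μ)
    (h : ∀ j ∈ Λ, j + v ∈ Λ') : localEnt p μ Λ ≤ localEnt p μ Λ' := by
  set g : Λ → Λ' := fun j ↦ ⟨j + v, h j j.2⟩
  have hg : Function.Injective g := fun a b hab ↦ Subtype.ext (by simpa [g] using hab)
  have hmarg : (marginal μ Λ').map (fun f ↦ f ∘ g) = marginal μ Λ := by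
    rw [marginal, Measure.map_map (by fun_prop) (by fun_prop), marginal]
    conv_rhs => rw [← hv]
    rw [Measure.map_map (by fun_prop) (by fun_prop)]
    rfl
  rw [localEnt, localEnt, ← hmarg, ← Measure.pi_map_comp_of_injective p hg]
  exact klDiv_map_le _ _ (by fun_prop)

lemma localEnt_mono {Λ Λ' : Finset (Zd d)} (h : Λ ⊆ Λ') : localEnt p μ Λ ≤ localEnt p μ Λ' :=
  localEnt_le_of_add_mem p 0 (by rw [shift_zero, Measure.map_id]) fun _ hj ↦ by simpa using h hj

variable [StandardBorelSpace S]

lemma localEnt_add_localEnt_le {Λ₁ Λ₂ : Finset (Zd d)} (h : Disjoint Λ₁ Λ₂) :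
    localEnt p μ Λ₁ + localEnt p μ Λ₂ ≤ localEnt p μ (Λ₁ ∪ Λ₂) := by
  have : Nonempty S := nonempty_of_isProbabilityMeasure p
  set e := MeasurableEquiv.piFinsetUnion (fun _ : Zd d ↦ S) h
  set ρ := μ.map fun ω ↦ (Λ₁.restrict ω, Λ₂.restrict ω)
  have : IsProbabilityMeasure ρ := Measure.isProbabilityMeasure_map (by fun_prop)
  have hρ : ρ.map e = marginal μ (Λ₁ ∪ Λ₂) := by
    rw [Measure.map_map e.measurable (by fun_prop), marginal]
    congr 1
    funext ω ⟨i, hi⟩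
    change Equiv.piFinsetUnion (fun _ ↦ S) h (Λ₁.restrict ω, Λ₂.restrict ω) ⟨i, hi⟩ = ω i
    rcases Finset.mem_union.1 hi with hi₁ | hi₂
    · exact Equiv.piFinsetUnion_left _ h hi₁ hi
    · exact Equiv.piFinsetUnion_right _ h hi₂ hi
  calc localEnt p μ Λ₁ + localEnt p μ Λ₂
      = klDiv ρ.fst (Measure.pi fun _ : Λ₁ ↦ p) + klDiv ρ.snd (Measure.pi fun _ : Λ₂ ↦ p) := by
        rw [Measure.fst, Measure.snd, Measure.map_map (by fun_prop) (by fun_prop),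
          Measure.map_map (by fun_prop) (by fun_prop)]
        rfl
    _ ≤ klDiv ρ ((Measure.pi fun _ : Λ₁ ↦ p).prod (Measure.pi fun _ : Λ₂ ↦ p)) :=
        klDiv_fst_add_klDiv_snd_le _ _ _
    _ = localEnt p μ (Λ₁ ∪ Λ₂) := by
        rw [← klDiv_map_measurableEquiv _ _ e, hρ,
          (measurePreserving_piFinsetUnion h fun _ ↦ p).map_eq, localEnt]

lemma sum_localEnt_le_localEnt_biUnion {ι : Type*} (s : Finset ι) {F : ι → Finset (Zd d)}
    (hF : (s : Set ι).PairwiseDisjoint F) :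
    ∑ t ∈ s, localEnt p μ (F t) ≤ localEnt p μ (s.biUnion F) := by
  classical
  induction s using Finset.induction_on with
  | empty => simp
  | insert a s ha ih =>
    rw [Finset.sum_insert ha, Finset.biUnion_insert]
    rw [Finset.coe_insert] at hF
    refine (add_le_add le_rfl (ih (hF.subset (Set.subset_insert _ _)))).trans
      (localEnt_add_localEnt_le p ?_)
    exact (Finset.disjoint_biUnion_right _ _ _).2 fun t ht ↦
      hF (Set.mem_insert _ _) (Set.mem_insert_of_mem _ ht) (ne_of_mem_of_not_mem ht ha).symm

lemma pow_mul_localEnt_cube_le (hinv : ShiftInvariant μ) {n : ℕ} (hn : 0 < n) (k : ℕ) :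
    (k : ℝ≥0∞) ^ d * localEnt p μ (cube d n) ≤ localEnt p μ (cube d (k * n)) :=
  calc (k : ℝ≥0∞) ^ d * localEnt p μ (cube d n)
      = ∑ _τ : Fin d → Fin k, localEnt p μ (cube d n) := by simp
    _ ≤ ∑ τ : Fin d → Fin k, localEnt p μ (cubeBlock d n k τ) :=
        Finset.sum_le_sum fun τ _ ↦ localEnt_le_of_add_mem p _ (hinv _)
          fun _ hj ↦ add_mem_cubeBlock hn τ hj
    _ ≤ localEnt p μ (Finset.univ.biUnion (cubeBlock d n k)) :=
        sum_localEnt_le_localEnt_biUnion p _ (by simpa using pairwiseDisjoint_cubeBlock d n k)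
    _ ≤ localEnt p μ (cube d (k * n)) :=
        localEnt_mono p (Finset.biUnion_subset.2 fun _ _ ↦ Finset.filter_subset _ _)

end LocalEnt

theorem specEnt_tendsto_general
    {d : ℕ} {S : Type*} [MeasurableSpace S] [StandardBorelSpace S]
    (p : Measure S) [IsProbabilityMeasure p]
    (μ : Measure (Zd d → S)) [IsProbabilityMeasure μ] (hinv : ShiftInvariant μ) :
    Tendsto
      (fun n : ℕ =>
        relEnt (marginal μ (cube d n)) (Measure.pi fun _ : cube d n => p)
          / ((2 * n : ℝ≥0∞) ^ d))
      atTop (nhds (specEnt p μ)) := by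
  simp only [specEnt, relEnt_eq_klDiv]
  exact tendsto_div_pow_limsup_of_pow_mul_le (fun _ _ h ↦ localEnt_mono p (cube_mono h))
    fun _ k hn ↦ pow_mul_localEnt_cube_le p hinv hn k

/-- For a shift-invariant probability measure `μ` on `S^{ℤ^d}` the
normalized relative entropies `(1/(2n)^d) I(μ_{Λ_n}; p^{⊗Λ_n})` converge in `[0,∞]`,
and the limit is the specific entropy `ℐ(μ)` (defined as the limsup). -/
theorem specEnt_tendsto
    {d : ℕ} (hd : 1 ≤ d) {S : Type*} [MeasurableSpace S] [StandardBorelSpace S]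
    (p : Measure S) [IsProbabilityMeasure p]
    (μ : Measure (Zd d → S)) [IsProbabilityMeasure μ] (hinv : ShiftInvariant μ) :
    Tendsto
      (fun n : ℕ =>
        relEnt (marginal μ (cube d n)) (Measure.pi fun _ : cube d n => p)
          / ((2 * n : ℝ≥0∞) ^ d))
      atTop (nhds (specEnt p μ)) :=
  specEnt_tendsto_general p μ hinv
end

section
/- Let (X,𝒳) and (Y,𝒴) be measurable spaces, let μ be a probability measure on X × Y (with the product σ-algebra), and let μ₁ := μ ∘ (Prod.fst)^{−1}, μ₂ := μ ∘ (Prod.snd)^{−1} be its marginals. Then for all probability measures ν₁ on X and ν₂ on Y, the relative entropy is superadditive over the two factors: I(μ₁; ν₁) + I(μ₂; ν₂) ≤ I(μ; ν₁ ⊗ ν₂). -/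
open MeasureTheory Filter Real
open scoped ENNReal

section Aux

variable {α : Type*} [MeasurableSpace α] {p q : Measure α}

lemma integrable_exp_neg_llr_aux [IsProbabilityMeasure p] [IsFiniteMeasure q] (h : p ≪ q) :
    Integrable (fun x ↦ exp (-llr p q x)) p :=
  (Measure.integrable_toReal_rnDeriv (μ := q) (ν := p)).congr (exp_neg_llr h).symm

lemma integrable_neg_part_llr_aux [IsProbabilityMeasure p] [IsFiniteMeasure q] (h : p ≪ q) :
    Integrable (fun x ↦ max (-llr p q x) 0) p := by
  refine (integrable_exp_neg_llr_aux h).mono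
    ((measurable_llr p q).neg.max measurable_const).aestronglyMeasurable
    (Filter.Eventually.of_forall fun x ↦ ?_)
  rw [Real.norm_eq_abs, Real.norm_eq_abs, abs_of_nonneg (le_max_right _ _),
    abs_of_pos (exp_pos _)]
  refine max_le ?_ (exp_pos _).le
  linarith [Real.add_one_le_exp (-llr p q x)]

lemma integral_llr_nonneg_aux [IsProbabilityMeasure p] [IsProbabilityMeasure q]
    (h : p ≪ q) (hint : Integrable (llr p q) p) : 0 ≤ ∫ x, llr p q x ∂p := by
  have hexp : Integrable (fun x ↦ exp (-llr p q x)) p := integrable_exp_neg_llr_aux h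
  have hj : exp (∫ x, -llr p q x ∂p) ≤ ∫ x, exp (-llr p q x) ∂p := by
    refine convexOn_exp.map_integral_le continuous_exp.continuousOn isClosed_univ
      (Filter.Eventually.of_forall fun x ↦ Set.mem_univ _) hint.neg ?_
    exact hexp
  have hle : ∫ x, exp (-llr p q x) ∂p ≤ 1 := by
    rw [integral_congr_ae (exp_neg_llr h)]
    calc ∫ x, (q.rnDeriv p x).toReal ∂p
        ≤ (q Set.univ).toReal := by
          rw [← setIntegral_univ]
          exact Measure.setIntegral_toReal_rnDeriv_le (measure_ne_top q Set.univ)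
      _ = 1 := by simp
  have : exp (∫ x, -llr p q x ∂p) ≤ 1 := hj.trans hle
  rw [Real.exp_le_one_iff, integral_neg] at this
  linarith

end Aux

/-- Superadditivity of the relative entropy over the two factors of a
product: `I(μ₁;ν₁) + I(μ₂;ν₂) ≤ I(μ; ν₁ ⊗ ν₂)` where `μ₁, μ₂` are the marginals of `μ`. -/
theorem relEnt_marginals_add_le
    {X Y : Type*} [MeasurableSpace X] [MeasurableSpace Y]
    (μ : Measure (X × Y)) [IsProbabilityMeasure μ]
    (ν₁ : Measure X) (ν₂ : Measure Y)
    [IsProbabilityMeasure ν₁] [IsProbabilityMeasure ν₂] :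
    relEnt (μ.map Prod.fst) ν₁ + relEnt (μ.map Prod.snd) ν₂ ≤ relEnt μ (ν₁.prod ν₂) := by
  by_cases hca : μ ≪ ν₁.prod ν₂ ∧ Integrable (llr μ (ν₁.prod ν₂)) μ
  swap
  · have h : relEnt μ (ν₁.prod ν₂) = ⊤ := by rw [relEnt, if_neg hca]
    rw [h]; exact le_top
  obtain ⟨hac, hint⟩ := hca
  set μ₁ : Measure X := μ.map Prod.fst with hμ₁
  set μ₂ : Measure Y := μ.map Prod.snd with hμ₂
  haveI : IsProbabilityMeasure μ₁ := Measure.isProbabilityMeasure_map measurable_fst.aemeasurable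
  haveI : IsProbabilityMeasure μ₂ := Measure.isProbabilityMeasure_map measurable_snd.aemeasurable
  set pp : Measure (X × Y) := μ₁.prod μ₂ with hppdef
  set xi : Measure (X × Y) := ν₁.prod ν₂ with hxidef
  -- absolute continuity of the marginals
  have hac1 : μ₁ ≪ ν₁ := by
    refine Measure.AbsolutelyContinuous.mk fun s hs h0 ↦ ?_
    rw [hμ₁, Measure.map_apply measurable_fst hs]
    refine hac ?_
    have hps : Prod.fst ⁻¹' s = s ×ˢ (Set.univ : Set Y) := by ext z; simp
    rw [hps, hxidef, Measure.prod_prod, h0, zero_mul]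
  have hac2 : μ₂ ≪ ν₂ := by
    refine Measure.AbsolutelyContinuous.mk fun s hs h0 ↦ ?_
    rw [hμ₂, Measure.map_apply measurable_snd hs]
    refine hac ?_
    have hps : Prod.snd ⁻¹' s = (Set.univ : Set X) ×ˢ s := by ext z; simp
    rw [hps, hxidef, Measure.prod_prod, h0, mul_zero]
  have hacppxi : pp ≪ xi := hac1.prod hac2
  -- the product of the marginals has density `g` w.r.t. `xi`
  set g : (X × Y) → ℝ≥0∞ := fun z ↦ μ₁.rnDeriv ν₁ z.1 * μ₂.rnDeriv ν₂ z.2 with hgdef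
  have hg_meas : Measurable g :=
    ((μ₁.measurable_rnDeriv ν₁).comp measurable_fst).mul
      ((μ₂.measurable_rnDeriv ν₂).comp measurable_snd)
  have hpp : pp = xi.withDensity g := by
    refine Measure.prod_eq fun s t hs ht ↦ ?_
    rw [withDensity_apply _ (hs.prod ht), hxidef, ← Measure.prod_restrict s t,
      hgdef]
    rw [lintegral_prod_mul ((μ₁.measurable_rnDeriv ν₁).aemeasurable)
      ((μ₂.measurable_rnDeriv ν₂).aemeasurable)]
    rw [Measure.setLIntegral_rnDeriv hac1, Measure.setLIntegral_rnDeriv hac2]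
  -- positivity of the marginal densities, μ-a.e.
  have h1pos : ∀ᵐ z ∂μ, 0 < μ₁.rnDeriv ν₁ z.1 := by
    have h := Measure.rnDeriv_pos hac1
    exact (ae_map_iff measurable_fst.aemeasurable
      (measurableSet_lt measurable_const (μ₁.measurable_rnDeriv ν₁))).mp h
  have h2pos : ∀ᵐ z ∂μ, 0 < μ₂.rnDeriv ν₂ z.2 := by
    have h := Measure.rnDeriv_pos hac2
    exact (ae_map_iff measurable_snd.aemeasurable
      (measurableSet_lt measurable_const (μ₂.measurable_rnDeriv ν₂))).mp h
  have h1lt : ∀ᵐ z ∂μ, μ₁.rnDeriv ν₁ z.1 < ∞ := by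
    have h := hac1.ae_le (Measure.rnDeriv_lt_top μ₁ ν₁)
    exact (ae_map_iff measurable_fst.aemeasurable
      (measurableSet_lt (μ₁.measurable_rnDeriv ν₁) measurable_const)).mp h
  have h2lt : ∀ᵐ z ∂μ, μ₂.rnDeriv ν₂ z.2 < ∞ := by
    have h := hac2.ae_le (Measure.rnDeriv_lt_top μ₂ ν₂)
    exact (ae_map_iff measurable_snd.aemeasurable
      (measurableSet_lt (μ₂.measurable_rnDeriv ν₂) measurable_const)).mp h
  -- μ ≪ pp
  have hacpp : μ ≪ pp := by
    refine Measure.AbsolutelyContinuous.mk fun A hA h0 ↦ ?_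
    rw [hpp, withDensity_apply_eq_zero hg_meas] at h0
    have hgne : ∀ᵐ z ∂μ, g z ≠ 0 := by
      filter_upwards [h1pos, h2pos] with z hz1 hz2
      exact mul_ne_zero hz1.ne' hz2.ne'
    have hS : MeasurableSet {z | g z ≠ 0} := (hg_meas (measurableSet_singleton 0)).compl
    have h0' : μ (A ∩ {z | g z ≠ 0}) = 0 := hac (by rwa [Set.inter_comm] at h0)
    have h0'' : μ (A \ {z | g z ≠ 0}) = 0 := by
      refine measure_mono_null (fun z hz ↦ ?_) (ae_iff.mp hgne)
      simpa using hz.2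
    have := measure_inter_add_diff A hS (μ := μ)
    rw [h0', h0'', add_zero] at this
    exact this.symm
  haveI : IsProbabilityMeasure pp := by infer_instance
  haveI : IsProbabilityMeasure xi := by infer_instance
  -- the log-density identity, μ-a.e.
  have hrnppxi : ∀ᵐ z ∂μ, pp.rnDeriv xi z = g z :=
    hac.ae_le (hpp ▸ Measure.rnDeriv_withDensity xi hg_meas)
  have hchain : ∀ᵐ z ∂μ, μ.rnDeriv pp z * pp.rnDeriv xi z = μ.rnDeriv xi z :=
    hac.ae_le (Measure.rnDeriv_mul_rnDeriv hacpp)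
  have hpppos : ∀ᵐ z ∂μ, 0 < μ.rnDeriv pp z := Measure.rnDeriv_pos hacpp
  have hpplt : ∀ᵐ z ∂μ, μ.rnDeriv pp z < ∞ := hacpp.ae_le (Measure.rnDeriv_lt_top μ pp)
  have hllr : ∀ᵐ z ∂μ, llr μ xi z = llr μ pp z + (llr μ₁ ν₁ z.1 + llr μ₂ ν₂ z.2) := by
    filter_upwards [hrnppxi, hchain, hpppos, hpplt, h1pos, h2pos, h1lt, h2lt]
      with z he hc hp hl h1p h2p h1l h2l
    have hg_eq : (pp.rnDeriv xi z).toReal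
        = (μ₁.rnDeriv ν₁ z.1).toReal * (μ₂.rnDeriv ν₂ z.2).toReal := by
      rw [he, hgdef, ENNReal.toReal_mul]
    have h1ne : (μ₁.rnDeriv ν₁ z.1).toReal ≠ 0 := by
      simp [ENNReal.toReal_ne_zero, h1p.ne', h1l.ne]
    have h2ne : (μ₂.rnDeriv ν₂ z.2).toReal ≠ 0 := by
      simp [ENNReal.toReal_ne_zero, h2p.ne', h2l.ne]
    have hpne : (μ.rnDeriv pp z).toReal ≠ 0 := by
      simp [ENNReal.toReal_ne_zero, hp.ne', hl.ne]
    have hmul : (μ.rnDeriv xi z).toReal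
        = (μ.rnDeriv pp z).toReal
          * ((μ₁.rnDeriv ν₁ z.1).toReal * (μ₂.rnDeriv ν₂ z.2).toReal) := by
      rw [← hg_eq, ← ENNReal.toReal_mul, hc]
    rw [llr, llr, llr, llr, hmul, log_mul hpne (mul_ne_zero h1ne h2ne), log_mul h1ne h2ne]
  -- negative-part integrabilities
  have n1 : Integrable (fun z ↦ max (-llr μ₁ ν₁ z.1) 0) μ := by
    have h := integrable_neg_part_llr_aux hac1
    rw [hμ₁] at h
    exact (integrable_map_measure
      ((measurable_llr μ₁ ν₁).neg.max measurable_const).aestronglyMeasurable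
      measurable_fst.aemeasurable).mp h
  have n2 : Integrable (fun z ↦ max (-llr μ₂ ν₂ z.2) 0) μ := by
    have h := integrable_neg_part_llr_aux hac2
    rw [hμ₂] at h
    exact (integrable_map_measure
      ((measurable_llr μ₂ ν₂).neg.max measurable_const).aestronglyMeasurable
      measurable_snd.aemeasurable).mp h
  have npp : Integrable (fun z ↦ max (-llr μ pp z) 0) μ := integrable_neg_part_llr_aux hacpp
  -- integrability of the sum of marginal llrs
  set G : (X × Y) → ℝ := fun z ↦ llr μ₁ ν₁ z.1 + llr μ₂ ν₂ z.2 with hGdef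
  have hG_meas : AEStronglyMeasurable G μ :=
    (((measurable_llr μ₁ ν₁).comp measurable_fst).add
      ((measurable_llr μ₂ ν₂).comp measurable_snd)).aestronglyMeasurable
  have hG : Integrable G μ := by
    refine Integrable.mono (((hint.abs.add npp).add (n1.add n2))) hG_meas ?_
    filter_upwards [hllr] with z hz
    rw [Real.norm_eq_abs, Real.norm_eq_abs]
    refine (abs_le.2 ⟨?_, ?_⟩).trans (le_abs_self _) <;>
      simp only [hGdef, Pi.add_apply] <;>
      linarith [le_max_left (-llr μ₁ ν₁ z.1) 0, le_max_left (-llr μ₂ ν₂ z.2) 0,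
        le_max_left (-llr μ pp z) 0, le_max_right (-llr μ₁ ν₁ z.1) 0,
        le_max_right (-llr μ₂ ν₂ z.2) 0, le_max_right (-llr μ pp z) 0,
        le_abs_self (llr μ xi z), abs_nonneg (llr μ xi z)]
  -- integrability of each marginal llr (composed with projection)
  have h1int : Integrable (fun z ↦ llr μ₁ ν₁ z.1) μ := by
    refine Integrable.mono ((hG.abs.add n2).add n1)
      ((measurable_llr μ₁ ν₁).comp measurable_fst).aestronglyMeasurable ?_
    refine Filter.Eventually.of_forall fun z ↦ ?_
    rw [Real.norm_eq_abs, Real.norm_eq_abs]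
    have hGz : G z = llr μ₁ ν₁ z.1 + llr μ₂ ν₂ z.2 := by simp [hGdef]
    refine (abs_le.2 ⟨?_, ?_⟩).trans (le_abs_self _) <;>
      simp only [Pi.add_apply] <;>
      linarith [le_max_left (-llr μ₁ ν₁ z.1) 0, le_max_left (-llr μ₂ ν₂ z.2) 0,
        le_max_right (-llr μ₁ ν₁ z.1) 0, le_max_right (-llr μ₂ ν₂ z.2) 0,
        le_abs_self (G z), neg_abs_le (G z), abs_nonneg (G z)]
  have h2int : Integrable (fun z ↦ llr μ₂ ν₂ z.2) μ := by
    have : (fun z ↦ llr μ₂ ν₂ z.2) = fun z ↦ G z - llr μ₁ ν₁ z.1 := by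
      funext z; simp [hGdef]
    rw [this]
    exact hG.sub h1int
  have hint1 : Integrable (llr μ₁ ν₁) μ₁ := by
    rw [hμ₁]
    exact (integrable_map_measure (stronglyMeasurable_llr μ₁ ν₁).aestronglyMeasurable
      measurable_fst.aemeasurable).mpr h1int
  have hint2 : Integrable (llr μ₂ ν₂) μ₂ := by
    rw [hμ₂]
    exact (integrable_map_measure (stronglyMeasurable_llr μ₂ ν₂).aestronglyMeasurable
      measurable_snd.aemeasurable).mpr h2int
  have hppint : Integrable (llr μ pp) μ := by
    refine (hint.sub hG).congr ?_
    filter_upwards [hllr] with z hz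
    simp only [hGdef, Pi.sub_apply]
    linarith
  -- split the integral
  have hsum : ∫ z, llr μ xi z ∂μ = ∫ z, llr μ pp z ∂μ + ∫ z, G z ∂μ := by
    rw [← integral_add hppint hG]
    exact integral_congr_ae hllr
  have hG_eq : ∫ z, G z ∂μ = ∫ x, llr μ₁ ν₁ x ∂μ₁ + ∫ y, llr μ₂ ν₂ y ∂μ₂ := by
    rw [hGdef, integral_add h1int h2int, hμ₁, hμ₂,
      integral_map measurable_fst.aemeasurable
        (stronglyMeasurable_llr μ₁ ν₁).aestronglyMeasurable,
      integral_map measurable_snd.aemeasurable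
        (stronglyMeasurable_llr μ₂ ν₂).aestronglyMeasurable]
  have hpospp : 0 ≤ ∫ z, llr μ pp z ∂μ := integral_llr_nonneg_aux hacpp hppint
  have hpos1 : 0 ≤ ∫ x, llr μ₁ ν₁ x ∂μ₁ := integral_llr_nonneg_aux hac1 hint1
  have hpos2 : 0 ≤ ∫ y, llr μ₂ ν₂ y ∂μ₂ := integral_llr_nonneg_aux hac2 hint2
  rw [relEnt, relEnt, relEnt, if_pos ⟨hac1, hint1⟩, if_pos ⟨hac2, hint2⟩,
    if_pos ⟨hac, hint⟩, ← ENNReal.ofReal_add hpos1 hpos2]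
  refine ENNReal.ofReal_le_ofReal ?_
  rw [show ∫ z, llr μ (ν₁.prod ν₂) z ∂μ = ∫ z, llr μ xi z ∂μ from rfl, hsum, hG_eq]
  linarith
end

section
/- Let d ≥ 1, Δ ⊂ Z^d finite, and c ≥ 0. Let C' > 0 be a constant such that Σ_{j∈Δ} γ_{k−j} ≤ C'·γ_k for all k ∈ Z^d. Let (u_i)_{i∈Z^d} be a family of measurable functions u_i : [0,1] → [0,∞) and (A_i)_{i∈Z^d} nonnegative reals such that: (a) u_i(t) ≤ A_i + c·Σ_{k ∈ i+Δ} ∫_0^t u_k(s) ds for all i ∈ Z^d and t ∈ [0,1]; (b) Σ_{i∈Z^d} γ_i A_i < ∞; and (c) the function t ↦ Σ_{i∈Z^d} γ_i u_i(t) is bounded on [0,1]. Then for every t ∈ [0,1]: Σ_{i∈Z^d} γ_i u_i(t) ≤ (Σ_{i∈Z^d} γ_i A_i)·e^{cC't}. -/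
/-- The maximum norm `|i| = max_l |i_l|` on `ℤ^d`. -/
def mnorm {d : ℕ} (i : Zd d) : ℕ :=
  Finset.univ.sup fun l => (i l).natAbs

/-- The weight `γ_i = (1 + |i|)^{-(d+1)}`. -/
noncomputable def gam {d : ℕ} (i : Zd d) : ℝ :=
  ((1 + (mnorm i : ℝ)) ^ (d + 1))⁻¹

open MeasureTheory Filter
open scoped Pointwise Nat Topology

section Shift

variable {G : Type*} [AddCommGroup G] [DecidableEq G] {w v : G → ℝ} {Δ : Finset G} {C : ℝ}

theorem sum_mul_sum_add_le (hw : ∀ k, 0 ≤ w k) (hv : ∀ k, 0 ≤ v k)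
    (hdom : ∀ k, ∑ j ∈ Δ, w (k - j) ≤ C * w k) (F : Finset G) :
    ∑ i ∈ F, w i * ∑ j ∈ Δ, v (i + j) ≤ C * ∑ k ∈ F + Δ, w k * v k := by
  have hshift : ∀ j ∈ Δ, ∑ i ∈ F, w i * v (i + j) ≤ ∑ k ∈ F + Δ, w (k - j) * v k := by
    intro j hj
    calc ∑ i ∈ F, w i * v (i + j) = ∑ k ∈ F.image (· + j), w (k - j) * v k := by
          rw [Finset.sum_image fun x _ y _ => add_right_cancel]
          simp
      _ ≤ ∑ k ∈ F + Δ, w (k - j) * v k :=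
          Finset.sum_le_sum_of_subset_of_nonneg
            (Finset.image_subset_iff.2 fun i hi => Finset.add_mem_add hi hj)
            fun k _ _ => mul_nonneg (hw _) (hv k)
  calc ∑ i ∈ F, w i * ∑ j ∈ Δ, v (i + j)
      = ∑ j ∈ Δ, ∑ i ∈ F, w i * v (i + j) := by simp_rw [Finset.mul_sum]; exact Finset.sum_comm
    _ ≤ ∑ j ∈ Δ, ∑ k ∈ F + Δ, w (k - j) * v k := Finset.sum_le_sum hshift
    _ = ∑ k ∈ F + Δ, (∑ j ∈ Δ, w (k - j)) * v k := by
        rw [Finset.sum_comm]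
        simp_rw [Finset.sum_mul]
    _ ≤ ∑ k ∈ F + Δ, C * w k * v k :=
        Finset.sum_le_sum fun k _ => mul_le_mul_of_nonneg_right (hdom k) (hv k)
    _ = C * ∑ k ∈ F + Δ, w k * v k := by simp_rw [Finset.mul_sum, mul_assoc]

theorem sum_mul_sum_add_le_mul_tsum (hw : ∀ k, 0 ≤ w k) (hv : ∀ k, 0 ≤ v k)
    (hdom : ∀ k, ∑ j ∈ Δ, w (k - j) ≤ C * w k) (hC : 0 ≤ C)
    (hwv : Summable fun k => w k * v k) (F : Finset G) :
    ∑ i ∈ F, w i * ∑ j ∈ Δ, v (i + j) ≤ C * ∑' k, w k * v k :=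
  (sum_mul_sum_add_le hw hv hdom F).trans <| mul_le_mul_of_nonneg_left
    (hwv.sum_le_tsum _ fun k _ => mul_nonneg (hw k) (hv k)) hC

theorem summable_mul_sum_add (hw : ∀ k, 0 ≤ w k) (hv : ∀ k, 0 ≤ v k)
    (hdom : ∀ k, ∑ j ∈ Δ, w (k - j) ≤ C * w k) (hC : 0 ≤ C)
    (hwv : Summable fun k => w k * v k) :
    Summable fun i => w i * ∑ j ∈ Δ, v (i + j) :=
  summable_of_sum_le (fun i => mul_nonneg (hw i) (Finset.sum_nonneg fun _ _ => hv _))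
    (sum_mul_sum_add_le_mul_tsum hw hv hdom hC hwv)

theorem tsum_mul_sum_add_le (hw : ∀ k, 0 ≤ w k) (hv : ∀ k, 0 ≤ v k)
    (hdom : ∀ k, ∑ j ∈ Δ, w (k - j) ≤ C * w k) (hC : 0 ≤ C)
    (hwv : Summable fun k => w k * v k) :
    ∑' i, w i * ∑ j ∈ Δ, v (i + j) ≤ C * ∑' k, w k * v k :=
  (summable_mul_sum_add hw hv hdom hC hwv).tsum_le_of_sum_le
    (sum_mul_sum_add_le_mul_tsum hw hv hdom hC hwv)

end Shift

theorem sum_mul_integral_le_integral {ι : Type*} {w : ι → ℝ} {f : ι → ℝ → ℝ} {g : ℝ → ℝ}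
    {a b : ℝ} (hab : a ≤ b) (hw : ∀ k, 0 ≤ w k) (hf : ∀ k, ∀ s ∈ Set.Icc a b, 0 ≤ f k s)
    (hfi : ∀ k, IntervalIntegrable (f k) volume a b)
    (hsum : ∀ s ∈ Set.Icc a b, Summable fun k => w k * f k s)
    (hg : IntervalIntegrable g volume a b) (hle : ∀ s ∈ Set.Icc a b, ∑' k, w k * f k s ≤ g s)
    (F : Finset ι) :
    ∑ k ∈ F, w k * ∫ s in a..b, f k s ≤ ∫ s in a..b, g s := by
  have hFi : ∀ k ∈ F, IntervalIntegrable (fun s => w k * f k s) volume a b :=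
    fun k _ => (hfi k).const_mul _
  calc ∑ k ∈ F, w k * ∫ s in a..b, f k s = ∫ s in a..b, ∑ k ∈ F, w k * f k s := by
        rw [intervalIntegral.integral_finsetSum hFi]
        simp_rw [intervalIntegral.integral_const_mul]
    _ ≤ ∫ s in a..b, g s :=
        intervalIntegral.integral_mono_on hab
          (by simpa only [Finset.sum_fn] using IntervalIntegrable.sum F hFi) hg
          fun s hs => ((hsum s hs).sum_le_tsum F fun k _ => mul_nonneg (hw k) (hf k s hs)).trans
            (hle s hs)

theorem tsum_mul_le_tsum_add_integral {G : Type*} [AddCommGroup G] {w : G → ℝ} {Δ : Finset G}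
    {c C : ℝ} {u : G → ℝ → ℝ} {A : G → ℝ} {g : ℝ → ℝ} {t : ℝ} (ht : 0 ≤ t) (hc : 0 ≤ c)
    (hC : 0 ≤ C) (hw : ∀ k, 0 ≤ w k) (hdom : ∀ k, ∑ j ∈ Δ, w (k - j) ≤ C * w k)
    (hu : ∀ i, ∀ s ∈ Set.Icc 0 t, 0 ≤ u i s) (hui : ∀ i, IntervalIntegrable (u i) volume 0 t)
    (hrec : ∀ i, u i t ≤ A i + c * ∑ j ∈ Δ, ∫ s in 0..t, u (i + j) s)
    (hA : Summable fun i => w i * A i) (hsum : ∀ s ∈ Set.Icc 0 t, Summable fun i => w i * u i s)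
    (hg : IntervalIntegrable g volume 0 t) (hle : ∀ s ∈ Set.Icc 0 t, ∑' i, w i * u i s ≤ g s) :
    ∑' i, w i * u i t ≤ ∑' i, w i * A i + c * C * ∫ s in 0..t, g s := by
  classical
  set v : G → ℝ := fun k => ∫ s in 0..t, u k s
  have hv : ∀ k, 0 ≤ v k := fun k => intervalIntegral.integral_nonneg ht (hu k)
  have hwv_le := sum_mul_integral_le_integral ht hw hu hui hsum hg hle
  have hwv : Summable fun k => w k * v k :=
    summable_of_sum_le (fun k => mul_nonneg (hw k) (hv k)) hwv_le
  have hT := (summable_mul_sum_add hw hv hdom hC hwv).mul_left c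
  calc ∑' i, w i * u i t ≤ ∑' i, (w i * A i + c * (w i * ∑ j ∈ Δ, v (i + j))) :=
        (hsum t ⟨ht, le_rfl⟩).tsum_le_tsum
          (fun i => (mul_le_mul_of_nonneg_left (hrec i) (hw i)).trans_eq (by ring))
          (hA.add hT)
    _ = ∑' i, w i * A i + c * ∑' i, w i * ∑ j ∈ Δ, v (i + j) := by
        rw [hA.tsum_add hT, tsum_mul_left]
    _ ≤ ∑' i, w i * A i + c * (C * ∑' k, w k * v k) := by
        gcongr
        exact tsum_mul_sum_add_le hw hv hdom hC hwv
    _ ≤ ∑' i, w i * A i + c * (C * ∫ s in 0..t, g s) := by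
        gcongr
        exact hwv.tsum_le_of_sum_le hwv_le
    _ = ∑' i, w i * A i + c * C * ∫ s in 0..t, g s := by ring

/-- The Picard iterates of `g ↦ a + K ∫_0^t g` started at `a e^{Kt} + B`; `a e^{Kt}` is a fixed
point of that map. -/
noncomputable def gronwallIterate (a B K : ℝ) (n : ℕ) (t : ℝ) : ℝ :=
  a * Real.exp (K * t) + B * (K * t) ^ n / n !

theorem continuous_gronwallIterate (a B K : ℝ) (n : ℕ) : Continuous (gronwallIterate a B K n) := by
  unfold gronwallIterate
  fun_prop

theorem hasDerivAt_gronwallIterate_succ (a B K : ℝ) (n : ℕ) (t : ℝ) :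
    HasDerivAt (gronwallIterate a B K (n + 1)) (K * gronwallIterate a B K n t) t := by
  have hKt : HasDerivAt (fun s => K * s) K t := by simpa using (hasDerivAt_id t).const_mul K
  refine ((hKt.exp.const_mul a).add (((hKt.pow (n + 1)).const_mul B).div_const
    ((n + 1)! : ℝ))).congr_deriv ?_
  simp only [gronwallIterate, Nat.factorial_succ, Nat.cast_mul, Nat.add_sub_cancel]
  field_simp

theorem add_mul_integral_gronwallIterate (a B K : ℝ) (n : ℕ) (t : ℝ) :
    a + K * ∫ s in 0..t, gronwallIterate a B K n s = gronwallIterate a B K (n + 1) t := by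
  rw [← intervalIntegral.integral_const_mul, intervalIntegral.integral_eq_sub_of_hasDerivAt
    (fun s _ => hasDerivAt_gronwallIterate_succ a B K n s)
    ((continuous_const.mul (continuous_gronwallIterate a B K n)).intervalIntegrable _ _)]
  simp [gronwallIterate]

theorem tendsto_gronwallIterate (a B K t : ℝ) :
    Tendsto (fun n => gronwallIterate a B K n t) atTop (𝓝 (a * Real.exp (K * t))) := by
  have h := ((FloorSemiring.tendsto_pow_div_factorial_atTop (K * t)).const_mul B).const_add
    (a * Real.exp (K * t))
  simpa [gronwallIterate, mul_div_assoc] using h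

theorem le_mul_exp_of_le_add_integral {f : ℝ → ℝ} {a K B T t : ℝ} (ha : 0 ≤ a)
    (hB : ∀ s ∈ Set.Icc 0 T, f s ≤ B)
    (h : ∀ g : ℝ → ℝ, Continuous g → (∀ s ∈ Set.Icc 0 T, f s ≤ g s) →
      ∀ s ∈ Set.Icc 0 T, f s ≤ a + K * ∫ r in 0..s, g r)
    (ht : t ∈ Set.Icc 0 T) : f t ≤ a * Real.exp (K * t) := by
  have hiter : ∀ n, ∀ s ∈ Set.Icc 0 T, f s ≤ gronwallIterate a B K n s := by
    intro n
    induction n with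
    | zero =>
      intro s hs
      simpa [gronwallIterate] using
        (hB s hs).trans (le_add_of_nonneg_left (mul_nonneg ha (Real.exp_pos (K * s)).le))
    | succ n ih =>
      intro s hs
      rw [← add_mul_integral_gronwallIterate]
      exact h _ (continuous_gronwallIterate a B K n) ih s hs
  exact ge_of_tendsto (tendsto_gronwallIterate a B K t) (Eventually.of_forall fun n => hiter n t ht)

theorem gam_pos {d : ℕ} (i : Zd d) : 0 < gam i := by
  unfold gam
  positivity

open MeasureTheory intervalIntegral in
theorem weighted_gronwall_general (d : ℕ) (Δ : Finset (Zd d))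
    (c : ℝ) (hc : 0 ≤ c) (C' : ℝ) (hC' : 0 < C')
    (hdom : ∀ k : Zd d, ∑ j ∈ Δ, gam (k - j) ≤ C' * gam k)
    (u : Zd d → ℝ → ℝ) (humeas : ∀ i, Measurable (u i))
    (hunonneg : ∀ i : Zd d, ∀ t ∈ Set.Icc (0 : ℝ) 1, 0 ≤ u i t)
    (A : Zd d → ℝ) (hA : ∀ i, 0 ≤ A i)
    (hrec : ∀ i : Zd d, ∀ t ∈ Set.Icc (0 : ℝ) 1,
      u i t ≤ A i + c * ∑ j ∈ Δ, ∫ s in (0 : ℝ)..t, u (i + j) s)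
    (hAsum : Summable (fun i : Zd d => gam i * A i))
    (hbdd : ∃ B : ℝ, ∀ t ∈ Set.Icc (0 : ℝ) 1,
      Summable (fun i : Zd d => gam i * u i t) ∧ (∑' i : Zd d, gam i * u i t) ≤ B) :
    ∀ t ∈ Set.Icc (0 : ℝ) 1,
      (∑' i : Zd d, gam i * u i t)
        ≤ (∑' i : Zd d, gam i * A i) * Real.exp (c * C' * t) := by
  obtain ⟨B, hB⟩ := hbdd
  have hu_le : ∀ i, ∀ s ∈ Set.Icc (0 : ℝ) 1, ‖u i s‖ ≤ B / gam i := fun i s hs => by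
    rw [Real.norm_of_nonneg (hunonneg i s hs), le_div_iff₀' (gam_pos i)]
    exact ((hB s hs).1.le_tsum i fun k _ => mul_nonneg (gam_pos k).le (hunonneg k s hs)).trans
      (hB s hs).2
  have hui : ∀ i, ∀ t ∈ Set.Icc (0 : ℝ) 1, IntervalIntegrable (u i) volume 0 t := by
    intro i t ht
    refine (intervalIntegrable_const (c := B / gam i)).mono_fun'
      (humeas i).aestronglyMeasurable.restrict ?_
    filter_upwards [ae_restrict_mem measurableSet_uIoc] with s hs
    rw [Set.uIoc_of_le ht.1] at hs
    exact hu_le i s ⟨hs.1.le, hs.2.trans ht.2⟩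
  intro t ht
  refine le_mul_exp_of_le_add_integral (tsum_nonneg fun i => mul_nonneg (gam_pos i).le (hA i))
    (fun s hs => (hB s hs).2) (fun g hg hle s hs => ?_) ht
  have hsub : Set.Icc 0 s ⊆ Set.Icc (0 : ℝ) 1 := Set.Icc_subset_Icc_right hs.2
  exact tsum_mul_le_tsum_add_integral hs.1 hc hC'.le (fun k => (gam_pos k).le) hdom
    (fun i r hr => hunonneg i r (hsub hr)) (fun i => hui i s hs) (fun i => hrec i s hs) hAsum
    (fun r hr => (hB r (hsub hr)).1) (hg.intervalIntegrable 0 s) (fun r hr => hle r (hsub hr))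

open MeasureTheory intervalIntegral in
/-- A weighted Gronwall-type lemma: if the nonnegative functions `u_i`
satisfy `u_i(t) ≤ A_i + c Σ_{k∈i+Δ} ∫_0^t u_k(s) ds` on `[0,1]`, with `Σ γ_i A_i < ∞` and
`t ↦ Σ γ_i u_i(t)` bounded, then `Σ γ_i u_i(t) ≤ (Σ γ_i A_i) e^{cC't}` for `t ∈ [0,1]`,
where `C'` dominates `Σ_{j∈Δ} γ_{k−j} ≤ C' γ_k`. -/
theorem weighted_gronwall (d : ℕ) (hd : 1 ≤ d) (Δ : Finset (Zd d))
    (c : ℝ) (hc : 0 ≤ c) (C' : ℝ) (hC' : 0 < C')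
    (hdom : ∀ k : Zd d, ∑ j ∈ Δ, gam (k - j) ≤ C' * gam k)
    (u : Zd d → ℝ → ℝ) (humeas : ∀ i, Measurable (u i))
    (hunonneg : ∀ i : Zd d, ∀ t ∈ Set.Icc (0 : ℝ) 1, 0 ≤ u i t)
    (A : Zd d → ℝ) (hA : ∀ i, 0 ≤ A i)
    (hrec : ∀ i : Zd d, ∀ t ∈ Set.Icc (0 : ℝ) 1,
      u i t ≤ A i + c * ∑ j ∈ Δ, ∫ s in (0 : ℝ)..t, u (i + j) s)
    (hAsum : Summable (fun i : Zd d => gam i * A i))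
    (hbdd : ∃ B : ℝ, ∀ t ∈ Set.Icc (0 : ℝ) 1,
      Summable (fun i : Zd d => gam i * u i t) ∧ (∑' i : Zd d, gam i * u i t) ≤ B) :
    ∀ t ∈ Set.Icc (0 : ℝ) 1,
      (∑' i : Zd d, gam i * u i t)
        ≤ (∑' i : Zd d, gam i * A i) * Real.exp (c * C' * t) :=
  weighted_gronwall_general d Δ c hc C' hC' hdom u humeas hunonneg A hA hrec hAsum hbdd
end
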